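/- Let S be a set of primes and {a_n(q)}_{n≥1} ⊆ ℤ[q]. The following are equivalent: (1) {a_n(q)} satisfies the q-Gauss congruences with respect to S; (2) for all m ≥ 1, all n ∈ ℕ_S, and every n-th root of unity ω, one has a_{nm}(ω) = a_{nm/ord(ω)}(1); (3) for all m ≥ 1, all n ∈ ℕ_S, and every divisor d of n, one has a_{nm}(q) ≡ a_{nm/d}(1) mod Φ_d(q), where Φ_d is the d-th cyclotomic polynomial. -/

import Mathlib

open Polynomial Finset

/-- The `q`-analogue `[n]_q = 1 + q + ⋯ + q^{n-1}` in `ℤ[q]`. -/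
noncomputable def qInt (n : ℕ) : Polynomial ℤ := ∑ i ∈ Finset.range n, X ^ i

/-- `n ∈ ℕ_S`: `n` is a positive integer divisible only by primes from `S`. -/
def NatS (S : Set ℕ) (n : ℕ) : Prop := 0 < n ∧ ∀ p : ℕ, p.Prime → p ∣ n → p ∈ S

/-- `{a_n(q)}` satisfies the `q`-Gauss congruences with respect to `S`:
for all `n ∈ ℕ_S` and `m ≥ 1`, `∑_{d ∣ n} μ(d) a_{nm/d}(q^d) ≡ 0 mod [n]_q`. -/
def qGaussWrt (S : Set ℕ) (a : ℕ → Polynomial ℤ) : Prop :=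
  ∀ n m : ℕ, NatS S n → 0 < m →
    qInt n ∣ ∑ d ∈ n.divisors,
      Polynomial.C (ArithmeticFunction.moebius d) * ((a (n * m / d)).comp (X ^ d))


/-! `Φ_d` is the minimal polynomial over `ℤ` of every primitive `d`-th root of unity `ζ`, so
conditions (2) and (3) both say that `a_{dm}(ζ) = a_m(1)` for all such `ζ`, `d ∈ ℕ_S`, `m ≥ 1`.
As `[n]_q = ∏_{1 ≠ d ∣ n} Φ_d(q)`, the `q`-Gauss congruence for `(n, m)` says that
`∑_{e ∣ n} μ(e) a_{nm/e}(ζ^e)` vanishes at the primitive `d`-th roots `ζ`, `1 ≠ d ∣ n`.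
Granting the values at roots of unity, `ζ^e` is a primitive `d / gcd(d, e)`-th root, so the sum
is `∑_{e ∣ n} μ(e) a_{nm/lcm(e,d)}(1)`; it vanishes because `lcm(e, d)` does not change when a
prime `p ∣ d` is adjoined to `e`. Conversely, by strong induction on `d`, every term with `e ≠ 1`
of the sum for `(d, m)` equals `μ(e) a_m(1)`, so its vanishing leaves `a_{dm}(ζ) = a_m(1)`.
-/

open scoped ArithmeticFunction.Moebius
open ArithmeticFunction

lemma NatS.of_dvd {S : Set ℕ} {n d : ℕ} (hn : NatS S n) (hd : d ∣ n) : NatS S d :=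
  ⟨Nat.pos_of_dvd_of_pos hd hn.1, fun p hp hpd => hn.2 p hp (hpd.trans hd)⟩

lemma Nat.lcm_mul_prime_eq {p c d : ℕ} (hp : p.Prime) (hpc : ¬ p ∣ c) (hpd : p ∣ d) :
    Nat.lcm (c * p) d = Nat.lcm c d := by
  rw [← ((hp.coprime_iff_not_dvd.2 hpc).symm).lcm_eq_mul, Nat.lcm_assoc,
    Nat.lcm_eq_right hpd]

lemma Nat.div_eq_div_gcd_mul_div_lcm {N d e : ℕ} (he : e ∣ N) (hd : d ∣ N) :
    N / e = d / d.gcd e * (N / Nat.lcm e d) := by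
  have hlcm : Nat.lcm e d = e * (d / d.gcd e) := by
    rw [Nat.lcm, Nat.gcd_comm, Nat.mul_div_assoc e (Nat.gcd_dvd_left d e)]
  have hdvd : d / d.gcd e ∣ N / e :=
    (Nat.dvd_div_iff_mul_dvd he).2 (hlcm ▸ Nat.lcm_dvd he hd)
  rw [hlcm, ← Nat.div_div_eq_div_mul, Nat.mul_div_cancel' hdvd]

lemma ArithmeticFunction.moebius_mul_prime {p c : ℕ} (hp : p.Prime) (hpc : ¬ p ∣ c) :
    μ (c * p) = -μ c := by
  rw [isMultiplicative_moebius.map_mul_of_coprime (hp.coprime_iff_not_dvd.2 hpc).symm,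
    moebius_apply_prime hp, mul_neg_one]

theorem ArithmeticFunction.sum_divisors_moebius_smul_eq_zero {M : Type*} [AddCommGroup M]
    {n p : ℕ} (hp : p.Prime) (hpn : p ∣ n) {f : ℕ → M} (hf : ∀ c, ¬ p ∣ c → f (c * p) = f c) :
    ∑ e ∈ n.divisors, μ e • f e = 0 := by
  classical
  have hpair : ∀ c, ¬ p ∣ c → μ c • f c + μ (c * p) • f (c * p) = 0 := fun c hc => by
    rw [moebius_mul_prime hp hc, hf c hc, neg_smul, add_neg_cancel]
  have hquot : ∀ e, Squarefree e → p ∣ e → ¬ p ∣ e / p := fun e he hpe => by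
    rw [← Nat.div_mul_cancel hpe, Nat.squarefree_mul_iff] at he
    exact hp.coprime_iff_not_dvd.1 he.1.symm
  -- on squarefree divisors, `e ↦ e / p` or `e * p` pairs off terms of opposite sign
  rw [← sum_filter_of_ne fun e _ he => moebius_ne_zero_iff_squarefree.1 (left_ne_zero_of_smul he)]
  refine sum_involution (fun e _ => if p ∣ e then e / p else e * p) (fun e he => ?_)
    (fun e he _ => ?_) (fun e he => ?_) (fun e he => ?_)
  all_goals obtain ⟨hen, hsq⟩ := mem_filter.1 he
  · split_ifs with hpe
    · rw [add_comm, ← hpair _ (hquot e hsq hpe), Nat.div_mul_cancel hpe]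
    · exact hpair e hpe
  · have he0 := Nat.pos_of_mem_divisors hen
    split_ifs with hpe
    · exact (Nat.div_lt_self he0 hp.one_lt).ne
    · exact ((lt_mul_iff_one_lt_right he0).2 hp.one_lt).ne'
  · obtain ⟨hen, hn⟩ := Nat.mem_divisors.1 hen
    refine mem_filter.2 ?_
    split_ifs with hpe
    · exact ⟨Nat.mem_divisors.2 ⟨(Nat.div_dvd_of_dvd hpe).trans hen, hn⟩,
        hsq.squarefree_of_dvd (Nat.div_dvd_of_dvd hpe)⟩
    · have hcop : e.Coprime p := (hp.coprime_iff_not_dvd.2 hpe).symm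
      exact ⟨Nat.mem_divisors.2 ⟨hcop.mul_dvd_of_dvd_of_dvd hen hpn, hn⟩,
        Nat.squarefree_mul_iff.2 ⟨hcop, hsq, hp.squarefree⟩⟩
  · by_cases hpe : p ∣ e
    · rw [if_pos hpe, if_neg (hquot e hsq hpe), Nat.div_mul_cancel hpe]
    · rw [if_neg hpe, if_pos (dvd_mul_left p e), Nat.mul_div_cancel e hp.pos]

lemma IsPrimitiveRoot.pow_div_gcd {M : Type*} [CommMonoid M] {ζ : M} {k : ℕ}
    (h : IsPrimitiveRoot ζ k) {e : ℕ} (he : e ≠ 0) : IsPrimitiveRoot (ζ ^ e) (k / k.gcd e) := by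
  rw [h.eq_orderOf, ← orderOf_pow' ζ he]
  exact IsPrimitiveRoot.orderOf _

lemma IsPrimitiveRoot.cyclotomic_dvd_iff_aeval_eq_zero {K : Type*} [Field K] [CharZero K]
    {ζ : K} {d : ℕ} (h : IsPrimitiveRoot ζ d) (hd : 0 < d) (g : ℤ[X]) :
    cyclotomic d ℤ ∣ g ↔ aeval ζ g = 0 := by
  rw [cyclotomic_eq_minpoly h hd, minpoly.isIntegrallyClosed_dvd_iff (h.isIntegral hd)]

lemma qInt_eq_prod_cyclotomic {n : ℕ} (hn : 0 < n) :
    qInt n = ∏ d ∈ n.divisors.erase 1, cyclotomic d ℤ :=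
  (prod_cyclotomic_eq_geom_sum hn ℤ).symm

lemma qInt_dvd_iff {n : ℕ} (hn : 0 < n) {f : ℤ[X]} :
    qInt n ∣ f ↔ ∀ d ∈ n.divisors.erase 1, cyclotomic d ℤ ∣ f := by
  refine ⟨fun h d hd => (qInt_eq_prod_cyclotomic hn ▸ dvd_prod_of_mem _ hd).trans h, fun h => ?_⟩
  -- distinct cyclotomic polynomials are coprime over `ℚ` (though not over `ℤ`)
  have hprod : (∏ d ∈ n.divisors.erase 1, cyclotomic d ℚ) ∣ f.map (Int.castRingHom ℚ) :=
    prod_dvd_of_coprime (fun i _ j _ hij => cyclotomic.isCoprime_rat hij)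
      fun d hd => map_cyclotomic_int d ℚ ▸ Polynomial.map_dvd _ (h d hd)
  have hmonic : (qInt n).Monic := by
    rw [qInt_eq_prod_cyclotomic hn]
    exact monic_prod_of_monic _ _ fun d _ => cyclotomic.monic d ℤ
  rw [← map_dvd_map _ (Int.castRingHom ℚ).injective_int hmonic, qInt_eq_prod_cyclotomic hn,
    Polynomial.map_prod]
  simpa only [map_cyclotomic_int] using hprod

lemma aeval_C_mul_comp_X_pow {A : Type*} [CommRing A] (ζ : A) (k : ℤ) (p : ℤ[X]) (d : ℕ) :
    aeval ζ (C k * p.comp (X ^ d)) = k • aeval (ζ ^ d) p := by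
  rw [map_mul, aeval_C, aeval_comp, map_pow, aeval_X, zsmul_eq_mul, algebraMap_int_eq,
    eq_intCast]

lemma aeval_sub_C_eval_one {A : Type*} [CommRing A] (ζ : A) (p q : ℤ[X]) :
    aeval ζ (p - C (q.eval 1)) = aeval ζ p - aeval 1 q := by
  rw [map_sub, aeval_C, aeval_def (1 : A), eval₂_at_one]

def PrimitiveRootEval (S : Set ℕ) (a : ℕ → ℤ[X]) : Prop :=
  ∀ d m : ℕ, NatS S d → 0 < m → ∀ ζ : ℂ, IsPrimitiveRoot ζ d →
    aeval ζ (a (d * m)) = aeval (1 : ℂ) (a m)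

section
variable {S : Set ℕ} {a : ℕ → ℤ[X]}

lemma aeval_qGauss_sum {A : Type*} [CommRing A] (ζ : A) (n m : ℕ) :
    aeval ζ (∑ d ∈ n.divisors, C (μ d) * (a (n * m / d)).comp (X ^ d)) =
      ∑ d ∈ n.divisors, μ d • aeval (ζ ^ d) (a (n * m / d)) := by
  simp only [map_sum, aeval_C_mul_comp_X_pow]

theorem PrimitiveRootEval.of_qGaussWrt (h : qGaussWrt S a) : PrimitiveRootEval S a := by
  intro d
  induction d using Nat.strong_induction_on with
  | _ d ih =>
  intro m hd hm ζ hζ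
  obtain rfl | hd1 := eq_or_ne d 1
  · rw [IsPrimitiveRoot.one_right_iff.1 hζ, one_mul]
  obtain ⟨p, hp, hpd⟩ := Nat.exists_prime_and_dvd hd1
  have hd0 : d ≠ 0 := hd.1.ne'
  have hproper : ∀ e ∈ d.divisors, e ≠ 1 → aeval (ζ ^ e) (a (d * m / e)) = aeval 1 (a m) := by
    intro e he he1
    have hed := Nat.dvd_of_mem_divisors he
    have he0 := Nat.pos_of_mem_divisors he
    rw [Nat.mul_div_right_comm hed]
    exact ih (d / e) (Nat.div_lt_self hd.1 (by omega)) m (hd.of_dvd (Nat.div_dvd_of_dvd hed))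
      hm _ (hζ.pow_of_dvd he0.ne' hed)
  have hgauss : ∑ e ∈ d.divisors, μ e • aeval (ζ ^ e) (a (d * m / e)) = 0 := by
    rw [← aeval_qGauss_sum, ← hζ.cyclotomic_dvd_iff_aeval_eq_zero hd.1]
    exact (qInt_dvd_iff hd.1).1 (h d m hd hm) d (mem_erase.2 ⟨hd1, Nat.mem_divisors_self d hd0⟩)
  have hconst : ∑ e ∈ d.divisors, μ e • aeval (1 : ℂ) (a m) = 0 :=
    sum_divisors_moebius_smul_eq_zero hp hpd fun _ _ => rfl
  refine sub_eq_zero.1 ?_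
  calc aeval ζ (a (d * m)) - aeval 1 (a m)
      = ∑ e ∈ d.divisors, μ e • (aeval (ζ ^ e) (a (d * m / e)) - aeval 1 (a m)) := by
        rw [sum_eq_single_of_mem 1 (Nat.one_mem_divisors.2 hd0) fun e he he1 => by
          rw [hproper e he he1, sub_self, smul_zero]]
        simp only [moebius_apply_one, one_smul, pow_one, Nat.div_one]
    _ = 0 := by simp only [smul_sub, sum_sub_distrib, hgauss, hconst, sub_zero]

theorem PrimitiveRootEval.qGaussWrt (h : PrimitiveRootEval S a) : qGaussWrt S a := by
  intro n m hn hm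
  rw [qInt_dvd_iff hn.1]
  intro d hd
  obtain ⟨hd1, hdn⟩ := mem_erase.1 hd
  have hd0 := Nat.pos_of_mem_divisors hdn
  replace hdn := Nat.dvd_of_mem_divisors hdn
  obtain ⟨ζ, hζ⟩ : ∃ ζ : ℂ, IsPrimitiveRoot ζ d := ⟨_, Complex.isPrimitiveRoot_exp d hd0.ne'⟩
  obtain ⟨p, hp, hpd⟩ := Nat.exists_prime_and_dvd hd1
  have hterm : ∀ e ∈ n.divisors,
      aeval (ζ ^ e) (a (n * m / e)) = aeval (1 : ℂ) (a (n * m / Nat.lcm e d)) := by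
    intro e he
    have hen := Nat.dvd_of_mem_divisors he
    have he0 := Nat.pos_of_mem_divisors he
    have hlcm : 0 < n * m / Nat.lcm e d :=
      Nat.div_pos (Nat.le_of_dvd (Nat.mul_pos hn.1 hm) ((Nat.lcm_dvd hen hdn).mul_right m))
        (Nat.lcm_pos he0 hd0)
    rw [Nat.div_eq_div_gcd_mul_div_lcm (hen.mul_right m) (hdn.mul_right m)]
    exact h _ _ (hn.of_dvd ((Nat.div_dvd_of_dvd (Nat.gcd_dvd_left d e)).trans hdn)) hlcm _
      (hζ.pow_div_gcd he0.ne')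
  rw [hζ.cyclotomic_dvd_iff_aeval_eq_zero hd0, aeval_qGauss_sum, sum_congr rfl fun e he => by
    rw [hterm e he]]
  exact sum_divisors_moebius_smul_eq_zero hp (hpd.trans hdn) fun c hc => by
    rw [Nat.lcm_mul_prime_eq hp hc hpd]

lemma PrimitiveRootEval.aeval_of_dvd (h : PrimitiveRootEval S a) {n m d : ℕ} (hn : NatS S n)
    (hm : 0 < m) (hdn : d ∣ n) {ζ : ℂ} (hζ : IsPrimitiveRoot ζ d) :
    aeval ζ (a (n * m)) = aeval (1 : ℂ) (a (n * m / d)) := by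
  have hd := hn.of_dvd hdn
  have := h d (n / d * m) hd (Nat.mul_pos (Nat.div_pos (Nat.le_of_dvd hn.1 hdn) hd.1) hm) ζ hζ
  rwa [← mul_assoc, Nat.mul_div_cancel' hdn, ← Nat.mul_div_right_comm hdn] at this

theorem primitiveRootEval_iff_forall_pow_eq_one : PrimitiveRootEval S a ↔
    ∀ m n : ℕ, 0 < m → NatS S n → ∀ ω : ℂ, ω ^ n = 1 →
      aeval ω (a (n * m)) = aeval (1 : ℂ) (a (n * m / orderOf ω)) := by
  refine ⟨fun h m n hm hn ω hω => ?_, fun h d m hd hm ζ hζ => ?_⟩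
  · exact h.aeval_of_dvd hn hm (orderOf_dvd_of_pow_eq_one hω) (IsPrimitiveRoot.orderOf ω)
  · have := h m d hm hd ζ hζ.pow_eq_one
    rwa [← hζ.eq_orderOf, Nat.mul_div_cancel_left _ hd.1] at this

theorem primitiveRootEval_iff_forall_cyclotomic_dvd : PrimitiveRootEval S a ↔
    ∀ m n : ℕ, 0 < m → NatS S n → ∀ d : ℕ, d ∣ n →
      cyclotomic d ℤ ∣ a (n * m) - C ((a (n * m / d)).eval 1) := by
  refine ⟨fun h m n hm hn d hdn => ?_, fun h d m hd hm ζ hζ => ?_⟩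
  · have hd0 := (hn.of_dvd hdn).1
    obtain ⟨ζ, hζ⟩ : ∃ ζ : ℂ, IsPrimitiveRoot ζ d := ⟨_, Complex.isPrimitiveRoot_exp d hd0.ne'⟩
    rw [hζ.cyclotomic_dvd_iff_aeval_eq_zero hd0, aeval_sub_C_eval_one, sub_eq_zero]
    exact h.aeval_of_dvd hn hm hdn hζ
  · have := h m d hm hd d dvd_rfl
    rwa [Nat.mul_div_cancel_left _ hd.1, hζ.cyclotomic_dvd_iff_aeval_eq_zero hd.1,
      aeval_sub_C_eval_one, sub_eq_zero] at this

theorem qGaussWrt_iff_primitiveRootEval : qGaussWrt S a ↔ PrimitiveRootEval S a :=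
  ⟨PrimitiveRootEval.of_qGaussWrt, PrimitiveRootEval.qGaussWrt⟩

end

theorem stmt1_general (S : Set ℕ) (a : ℕ → Polynomial ℤ) :
    (qGaussWrt S a ↔
      ∀ m n : ℕ, 0 < m → NatS S n → ∀ ω : ℂ, ω ^ n = 1 →
        Polynomial.aeval ω (a (n * m)) = Polynomial.aeval (1 : ℂ) (a (n * m / orderOf ω)))
    ∧ ((∀ m n : ℕ, 0 < m → NatS S n → ∀ ω : ℂ, ω ^ n = 1 →
        Polynomial.aeval ω (a (n * m)) = Polynomial.aeval (1 : ℂ) (a (n * m / orderOf ω))) ↔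
      ∀ m n : ℕ, 0 < m → NatS S n → ∀ d : ℕ, d ∣ n →
        Polynomial.cyclotomic d ℤ ∣ a (n * m) - Polynomial.C ((a (n * m / d)).eval 1)) :=
  ⟨qGaussWrt_iff_primitiveRootEval.trans primitiveRootEval_iff_forall_pow_eq_one,
    primitiveRootEval_iff_forall_pow_eq_one.symm.trans primitiveRootEval_iff_forall_cyclotomic_dvd⟩

theorem stmt1 (S : Set ℕ) (hS : ∀ p ∈ S, Nat.Prime p) (a : ℕ → Polynomial ℤ) :
    (qGaussWrt S a ↔
      ∀ m n : ℕ, 0 < m → NatS S n → ∀ ω : ℂ, ω ^ n = 1 →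
        Polynomial.aeval ω (a (n * m)) = Polynomial.aeval (1 : ℂ) (a (n * m / orderOf ω)))
    ∧ ((∀ m n : ℕ, 0 < m → NatS S n → ∀ ω : ℂ, ω ^ n = 1 →
        Polynomial.aeval ω (a (n * m)) = Polynomial.aeval (1 : ℂ) (a (n * m / orderOf ω))) ↔
      ∀ m n : ℕ, 0 < m → NatS S n → ∀ d : ℕ, d ∣ n →
        Polynomial.cyclotomic d ℤ ∣ a (n * m) - Polynomial.C ((a (n * m / d)).eval 1)) :=
  stmt1_general S a
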